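/- Let a, b > 1 and p_o := (a−1)/(a+b−2). Then for all x ≥ p_o, B̄_{a,b}(x) ≤ 2 Φ(−2√(a+b−2)·(x − p_o)), and for all x ≤ p_o, B_{a,b}(x) ≤ 2 Φ(2√(a+b−2)·(x − p_o)). -/

import Mathlib

/-! Past the mode `p = (a - 1) / (a + b - 2)` the Beta density is `ρ · g`, where `g` is the
Gaussian kernel with mean `p` and variance `1 / (4 (a + b - 2))` and `ρ` is nonincreasing: on
`(p, 1)` the derivative of `log ρ` equals `-(a + b - 2) (t - p) (2t - 1)² / (t (1 - t)) ≤ 0`.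
A density that is a nonincreasing multiple of `g` on `(p, ∞)` puts at most the fraction
`∫ₓ^∞ g / ∫ₚ^∞ g` of its mass on `(p, ∞)` into `(x, ∞)`, and that fraction is
`2 Φ(-2 √(a + b - 2) (x - p))`. The lower tail follows by the symmetry `t ↦ 1 - t`, which
exchanges `Beta(a, b)` and `Beta(b, a)`. -/

open MeasureTheory

/-- The Beta function `B(a,b) = ∫₀¹ t^{a-1} (1-t)^{b-1} dt`. -/
noncomputable def betaFn (a b : ℝ) : ℝ :=
  ∫ t in (0:ℝ)..1, t ^ (a - 1) * (1 - t) ^ (b - 1)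

/-- Density of the Beta(a,b) distribution. -/
noncomputable def betaPDF (a b t : ℝ) : ℝ :=
  if 0 < t ∧ t < 1 then (betaFn a b)⁻¹ * t ^ (a - 1) * (1 - t) ^ (b - 1) else 0

/-- Distribution function of the Beta(a,b) distribution. -/
noncomputable def betaCDF (a b x : ℝ) : ℝ := ∫ t in Set.Iic x, betaPDF a b t

/-- Standard normal distribution function `Φ`. -/
noncomputable def stdNormalCDF (z : ℝ) : ℝ :=
  ∫ t in Set.Iic z, (Real.sqrt (2 * Real.pi))⁻¹ * Real.exp (-t ^ 2 / 2)

open Set Real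

theorem setIntegral_Ioi_comp_sub_right (h : ℝ → ℝ) (c x : ℝ) :
    ∫ t in Ioi x, h (t - c) = ∫ u in Ioi (x - c), h u := by
  have := (measurePreserving_sub_right volume c).setIntegral_preimage_emb
    (MeasurableEquiv.subRight c).measurableEmbedding h (Ioi (x - c))
  rwa [preimage_sub_const_Ioi, sub_add_cancel] at this

theorem setIntegral_Iic_comp_sub_left (h : ℝ → ℝ) (c x : ℝ) :
    ∫ t in Iic x, h (c - t) = ∫ u in Ici (c - x), h u := by
  have := (Measure.measurePreserving_sub_left volume c).setIntegral_preimage_emb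
    (MeasurableEquiv.subLeft c).measurableEmbedding h (Ici (c - x))
  rwa [preimage_const_sub_Ici, sub_sub_cancel] at this

theorem stdNormalCDF_neg (z : ℝ) :
    stdNormalCDF (-z) = (√(2 * π))⁻¹ * ∫ s in Ioi z, exp (-s ^ 2 / 2) := by
  rw [stdNormalCDF, integral_const_mul, ← neg_neg z, ← integral_comp_neg_Iic, neg_neg]
  simp only [neg_sq]

theorem stdNormalCDF_zero : stdNormalCDF 0 = 1 / 2 := by
  have h := integral_gaussian_Ioi (1 / 2)
  have e : ∀ s : ℝ, -s ^ 2 / 2 = -(1 / 2) * s ^ 2 := fun s => by ring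
  have e2 : π / (1 / 2) = 2 * π := by ring
  have : 0 < √(2 * π) := by positivity
  rw [← neg_zero, stdNormalCDF_neg]
  simp only [e, h, e2]
  field_simp

theorem integral_Ioi_exp_neg_sq_scaled {c : ℝ} (hc : 0 < c) (m x : ℝ) :
    ∫ t in Ioi x, exp (-(c * (t - m)) ^ 2 / 2) =
      √(2 * π) / c * stdNormalCDF (-(c * (x - m))) := by
  rw [setIntegral_Ioi_comp_sub_right (fun u => exp (-(c * u) ^ 2 / 2)),
    integral_comp_mul_left_Ioi (fun s => exp (-s ^ 2 / 2)) _ hc, stdNormalCDF_neg, smul_eq_mul]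
  field_simp

theorem integrable_exp_neg_sq_scaled (c m : ℝ) (hc : c ≠ 0) :
    Integrable fun t => exp (-(c * (t - m)) ^ 2 / 2) := by
  have h := ((integrable_exp_neg_mul_sq (by norm_num : (0 : ℝ) < 1 / 2)).comp_mul_left' hc)
    |>.comp_sub_right m
  convert h using 2 with t
  ring_nf

theorem integral_Ioi_gaussian_div {c : ℝ} (hc : 0 < c) (m x : ℝ) :
    (∫ t in Ioi x, exp (-(c * (t - m)) ^ 2 / 2)) / ∫ t in Ioi m, exp (-(c * (t - m)) ^ 2 / 2) =
      2 * stdNormalCDF (-(c * (x - m))) := by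
  have : 0 < √(2 * π) := by positivity
  simp only [integral_Ioi_exp_neg_sq_scaled hc, sub_self, mul_zero, neg_zero, stdNormalCDF_zero]
  field_simp

theorem integral_Ioi_mul_integral_Ioi_le_of_antitoneOn {f g ρ : ℝ → ℝ} {p x : ℝ} (hpx : p ≤ x)
    (hf : IntegrableOn f (Ioi p)) (hg : IntegrableOn g (Ioi p)) (hg0 : ∀ t ∈ Ioi p, 0 ≤ g t)
    (hfg : ∀ t ∈ Ioi p, f t = ρ t * g t) (hρ : AntitoneOn ρ (Ici p)) :
    (∫ t in Ioi x, f t) * ∫ t in Ioi p, g t ≤ (∫ t in Ioi x, g t) * ∫ t in Ioi p, f t := by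
  have hsplit : ∀ k : ℝ → ℝ, IntegrableOn k (Ioi p) →
      ∫ t in Ioi p, k t = (∫ t in Ioc p x, k t) + ∫ t in Ioi x, k t := fun k hk => by
    rw [← setIntegral_union (Ioc_disjoint_Ioi le_rfl) measurableSet_Ioi
      (hk.mono_set Ioc_subset_Ioi_self) (hk.mono_set (Ioi_subset_Ioi hpx)),
      Ioc_union_Ioi_eq_Ioi hpx]
  have hlow : ρ x * ∫ t in Ioc p x, g t ≤ ∫ t in Ioc p x, f t := by
    rw [← integral_const_mul]
    refine setIntegral_mono_on ((hg.mono_set Ioc_subset_Ioi_self).const_mul _)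
      (hf.mono_set Ioc_subset_Ioi_self) measurableSet_Ioc fun t ht => ?_
    rw [hfg t ht.1]
    exact mul_le_mul_of_nonneg_right (hρ (mem_Ici.2 ht.1.le) (mem_Ici.2 hpx) ht.2) (hg0 t ht.1)
  have hup : ∫ t in Ioi x, f t ≤ ρ x * ∫ t in Ioi x, g t := by
    rw [← integral_const_mul]
    refine setIntegral_mono_on (hf.mono_set (Ioi_subset_Ioi hpx))
      ((hg.mono_set (Ioi_subset_Ioi hpx)).const_mul _) measurableSet_Ioi fun t ht => ?_
    have htp : p < t := hpx.trans_lt ht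
    rw [hfg t htp]
    exact mul_le_mul_of_nonneg_right (hρ (mem_Ici.2 hpx) (mem_Ici.2 htp.le) (le_of_lt ht))
      (hg0 t htp)
  have hG₁ : 0 ≤ ∫ t in Ioc p x, g t :=
    setIntegral_nonneg measurableSet_Ioc fun t ht => hg0 t ht.1
  have hG₂ : 0 ≤ ∫ t in Ioi x, g t :=
    setIntegral_nonneg measurableSet_Ioi fun t ht => hg0 t (hpx.trans_lt ht)
  rw [hsplit f hf, hsplit g hg]
  nlinarith [mul_le_mul_of_nonneg_right hup hG₁, mul_le_mul_of_nonneg_left hlow hG₂]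

theorem betaFn_nonneg (a b : ℝ) : 0 ≤ betaFn a b :=
  intervalIntegral.integral_nonneg zero_le_one fun _ ht =>
    mul_nonneg (rpow_nonneg ht.1 _) (rpow_nonneg (sub_nonneg.2 ht.2) _)

theorem betaFn_comm (a b : ℝ) : betaFn a b = betaFn b a := by
  have h := intervalIntegral.integral_comp_sub_left
    (fun t : ℝ => t ^ (b - 1) * (1 - t) ^ (a - 1)) (a := 0) (b := 1) 1
  simp only [sub_zero, sub_self, sub_sub_cancel] at h
  rw [betaFn, betaFn, ← h]
  simp only [mul_comm]

theorem continuous_rpow_mul_one_sub_rpow {a b : ℝ} (ha : 1 ≤ a) (hb : 1 ≤ b) :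
    Continuous fun t : ℝ => t ^ (a - 1) * (1 - t) ^ (b - 1) :=
  (continuous_rpow_const (sub_nonneg.2 ha)).mul
    ((continuous_rpow_const (sub_nonneg.2 hb)).comp (continuous_const.sub continuous_id))

theorem betaFn_pos {a b : ℝ} (ha : 1 ≤ a) (hb : 1 ≤ b) : 0 < betaFn a b :=
  intervalIntegral.intervalIntegral_pos_of_pos_on
    ((continuous_rpow_mul_one_sub_rpow ha hb).intervalIntegrable 0 1)
    (fun _ ht => mul_pos (rpow_pos_of_pos ht.1 _) (rpow_pos_of_pos (sub_pos.2 ht.2) _))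
    one_pos

theorem betaPDF_eq_indicator (a b : ℝ) :
    betaPDF a b =
      (Ioo 0 1).indicator fun t => (betaFn a b)⁻¹ * (t ^ (a - 1) * (1 - t) ^ (b - 1)) := by
  ext t
  by_cases ht : t ∈ Ioo (0 : ℝ) 1
  · rw [indicator_of_mem ht, betaPDF, if_pos (show 0 < t ∧ t < 1 from ht), mul_assoc]
  · rw [indicator_of_notMem ht, betaPDF, if_neg (show ¬(0 < t ∧ t < 1) from ht)]

theorem betaPDF_nonneg (a b t : ℝ) : 0 ≤ betaPDF a b t := by
  rw [betaPDF_eq_indicator]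
  exact indicator_nonneg (fun _ ht => mul_nonneg (inv_nonneg.2 (betaFn_nonneg a b))
    (mul_nonneg (rpow_nonneg ht.1.le _) (rpow_nonneg (sub_nonneg.2 ht.2.le) _))) t

theorem betaPDF_one_sub (a b t : ℝ) : betaPDF b a (1 - t) = betaPDF a b t := by
  simp only [betaPDF, sub_pos, sub_lt_self_iff, sub_sub_cancel, betaFn_comm b a, and_comm]
  split_ifs <;> ring

theorem integrable_betaPDF {a b : ℝ} (ha : 1 ≤ a) (hb : 1 ≤ b) : Integrable (betaPDF a b) := by
  rw [betaPDF_eq_indicator, integrable_indicator_iff measurableSet_Ioo]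
  exact ((continuous_rpow_mul_one_sub_rpow ha hb).integrableOn_Icc.mono_set
    Ioo_subset_Icc_self).const_mul _

theorem integral_betaPDF {a b : ℝ} (ha : 1 ≤ a) (hb : 1 ≤ b) : ∫ t, betaPDF a b t = 1 := by
  rw [betaPDF_eq_indicator, integral_indicator measurableSet_Ioo, integral_const_mul,
    ← integral_Ioc_eq_integral_Ioo, ← intervalIntegral.integral_of_le zero_le_one]
  exact inv_mul_cancel₀ (betaFn_pos ha hb).ne'

theorem one_sub_betaCDF {a b : ℝ} (ha : 1 ≤ a) (hb : 1 ≤ b) (x : ℝ) :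
    1 - betaCDF a b x = ∫ t in Ioi x, betaPDF a b t := by
  rw [← integral_betaPDF ha hb,
    ← integral_add_compl measurableSet_Iic (integrable_betaPDF ha hb), compl_Iic, betaCDF,
    add_sub_cancel_left]

theorem betaCDF_eq_one_sub_betaCDF_swap {a b : ℝ} (ha : 1 ≤ a) (hb : 1 ≤ b) (x : ℝ) :
    betaCDF a b x = 1 - betaCDF b a (1 - x) := by
  rw [one_sub_betaCDF hb ha, ← integral_Ici_eq_integral_Ioi, ← setIntegral_Iic_comp_sub_left,
    betaCDF]
  simp only [betaPDF_one_sub]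

noncomputable def betaMode (a b : ℝ) : ℝ := (a - 1) / (a + b - 2)

noncomputable def betaGaussianLogRatio (a b t : ℝ) : ℝ :=
  (a - 1) * log t + (b - 1) * log (1 - t) + 2 * (a + b - 2) * (t - betaMode a b) ^ 2

theorem betaMode_swap {a b : ℝ} (hab : a + b - 2 ≠ 0) : betaMode b a = 1 - betaMode a b := by
  rw [betaMode, betaMode, eq_sub_iff_add_eq, add_comm b a, ← add_div, div_eq_one_iff_eq hab]
  ring

theorem hasDerivAt_betaGaussianLogRatio (a b : ℝ) {t : ℝ} (ht0 : 0 < t) (ht1 : t < 1) :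
    HasDerivAt (betaGaussianLogRatio a b)
      ((a - 1) / t - (b - 1) / (1 - t) + 4 * (a + b - 2) * (t - betaMode a b)) t := by
  have hlog := (hasDerivAt_log ht0.ne').const_mul (a - 1)
  have hlog' := (((hasDerivAt_id t).const_sub 1).log (sub_pos.2 ht1).ne').const_mul (b - 1)
  have hsq := (((hasDerivAt_id t).sub_const (betaMode a b)).pow 2).const_mul (2 * (a + b - 2))
  have h : HasDerivAt (betaGaussianLogRatio a b) _ t := (hlog.add hlog').add hsq
  convert h using 1
  simp only [id, Nat.cast_ofNat]
  ring

theorem betaGaussianLogRatio_deriv_nonpos {a b t : ℝ} (ha : 1 < a) (hb : 1 < b)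
    (hpt : betaMode a b ≤ t) (ht1 : t < 1) :
    (a - 1) / t - (b - 1) / (1 - t) + 4 * (a + b - 2) * (t - betaMode a b) ≤ 0 := by
  have hn : 0 < a + b - 2 := by linarith
  have ht0 : 0 < t := (div_pos (by linarith) hn).trans_le hpt
  have ht1' : 0 < 1 - t := sub_pos.2 ht1
  have key : (a - 1) / t - (b - 1) / (1 - t) + 4 * (a + b - 2) * (t - betaMode a b)
      = -((a + b - 2) * (t - betaMode a b) * (2 * t - 1) ^ 2) / (t * (1 - t)) := by
    rw [betaMode]
    field_simp
    ring
  rw [key]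
  exact div_nonpos_of_nonpos_of_nonneg
    (neg_nonpos.2 (mul_nonneg (mul_nonneg hn.le (sub_nonneg.2 hpt)) (sq_nonneg _)))
    (mul_pos ht0 ht1').le

theorem antitoneOn_betaGaussianLogRatio {a b : ℝ} (ha : 1 < a) (hb : 1 < b) :
    AntitoneOn (betaGaussianLogRatio a b) (Ico (betaMode a b) 1) := by
  have hp : 0 < betaMode a b := div_pos (by linarith) (by linarith)
  have hderiv : ∀ t ∈ Ico (betaMode a b) 1, HasDerivAt (betaGaussianLogRatio a b)
      ((a - 1) / t - (b - 1) / (1 - t) + 4 * (a + b - 2) * (t - betaMode a b)) t :=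
    fun t ht => hasDerivAt_betaGaussianLogRatio a b (hp.trans_le ht.1) ht.2
  refine antitoneOn_of_hasDerivWithinAt_nonpos (convex_Ico _ _)
    (fun t ht => (hderiv t ht).continuousAt.continuousWithinAt)
    (fun t ht => (hderiv t (interior_subset ht)).hasDerivWithinAt)
    (fun t ht => betaGaussianLogRatio_deriv_nonpos ha hb
      (interior_subset ht).1 (interior_subset ht).2)

theorem rpow_mul_one_sub_rpow_eq_exp {a b t : ℝ} (hab : 0 ≤ a + b - 2) (ht0 : 0 < t)
    (ht1 : t < 1) :
    t ^ (a - 1) * (1 - t) ^ (b - 1) = exp (betaGaussianLogRatio a b t) *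
      exp (-(2 * √(a + b - 2) * (t - betaMode a b)) ^ 2 / 2) := by
  rw [← exp_add, betaGaussianLogRatio, mul_pow, mul_pow, sq_sqrt hab,
    rpow_def_of_pos ht0, rpow_def_of_pos (sub_pos.2 ht1), ← exp_add]
  ring_nf

/-- On `(0, 1)` this is `betaPDF a b t / exp (-2 (a + b - 2) (t - betaMode a b) ^ 2)`, the ratio of
the Beta density to a Gaussian kernel of variance `1 / (4 (a + b - 2))` centred at the mode. -/
noncomputable def betaGaussianRatio (a b t : ℝ) : ℝ :=
  if t < 1 then (betaFn a b)⁻¹ * exp (betaGaussianLogRatio a b t) else 0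

theorem betaGaussianRatio_nonneg (a b t : ℝ) : 0 ≤ betaGaussianRatio a b t := by
  unfold betaGaussianRatio
  split_ifs
  · exact mul_nonneg (inv_nonneg.2 (betaFn_nonneg a b)) (exp_pos _).le
  · exact le_rfl

theorem antitoneOn_betaGaussianRatio {a b : ℝ} (ha : 1 < a) (hb : 1 < b) :
    AntitoneOn (betaGaussianRatio a b) (Ici (betaMode a b)) := by
  intro s hs t ht hst
  by_cases ht1 : t < 1
  · have hs1 : s < 1 := hst.trans_lt ht1
    simp only [betaGaussianRatio, if_pos ht1, if_pos hs1]
    exact mul_le_mul_of_nonneg_left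
      (exp_le_exp.2 (antitoneOn_betaGaussianLogRatio ha hb ⟨hs, hs1⟩ ⟨ht, ht1⟩ hst))
      (inv_nonneg.2 (betaFn_nonneg a b))
  · rw [betaGaussianRatio, if_neg ht1]
    exact betaGaussianRatio_nonneg a b s

theorem betaPDF_eq_betaGaussianRatio_mul {a b t : ℝ} (hab : 0 ≤ a + b - 2) (ht : 0 < t) :
    betaPDF a b t =
      betaGaussianRatio a b t * exp (-(2 * √(a + b - 2) * (t - betaMode a b)) ^ 2 / 2) := by
  by_cases ht1 : t < 1
  · rw [betaPDF, if_pos ⟨ht, ht1⟩, betaGaussianRatio, if_pos ht1, mul_assoc,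
      rpow_mul_one_sub_rpow_eq_exp hab ht ht1]
    ring
  · rw [betaPDF, if_neg fun h => ht1 h.2, betaGaussianRatio, if_neg ht1, zero_mul]

theorem one_sub_betaCDF_le {a b x : ℝ} (ha : 1 < a) (hb : 1 < b) (hx : betaMode a b ≤ x) :
    1 - betaCDF a b x ≤ 2 * stdNormalCDF (-(2 * √(a + b - 2) * (x - betaMode a b))) := by
  set p := betaMode a b
  set c := 2 * √(a + b - 2)
  set g := fun t => exp (-(c * (t - p)) ^ 2 / 2)
  have hp : 0 < p := div_pos (by linarith) (by linarith)
  have hc : 0 < c := mul_pos two_pos (sqrt_pos.2 (by linarith))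
  have hf := integrable_betaPDF ha.le hb.le
  have hg : Integrable g := integrable_exp_neg_sq_scaled c p hc.ne'
  have hcross := integral_Ioi_mul_integral_Ioi_le_of_antitoneOn hx hf.integrableOn
    hg.integrableOn (fun _ _ => (exp_pos _).le)
    (fun t ht => betaPDF_eq_betaGaussianRatio_mul (by linarith) (hp.trans ht))
    (antitoneOn_betaGaussianRatio ha hb)
  have hmass : ∫ t in Ioi p, betaPDF a b t ≤ 1 :=
    (setIntegral_le_integral hf (ae_of_all _ (betaPDF_nonneg a b))).trans_eq
      (integral_betaPDF ha.le hb.le)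
  have hGp : 0 < ∫ t in Ioi p, g t := by
    simp only [g, integral_Ioi_exp_neg_sq_scaled hc, sub_self, mul_zero, neg_zero,
      stdNormalCDF_zero]
    positivity
  rw [one_sub_betaCDF ha.le hb.le, ← integral_Ioi_gaussian_div hc, le_div_iff₀ hGp]
  calc _ ≤ (∫ t in Ioi x, g t) * ∫ t in Ioi p, betaPDF a b t := hcross
    _ ≤ ∫ t in Ioi x, g t := mul_le_of_le_one_right
      (setIntegral_nonneg measurableSet_Ioi fun _ _ => (exp_pos _).le) hmass

theorem beta_gaussian_tail_bounds (a b : ℝ) (ha : 1 < a) (hb : 1 < b) :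
    (∀ x : ℝ, (a - 1) / (a + b - 2) ≤ x →
      1 - betaCDF a b x ≤
        2 * stdNormalCDF (-2 * Real.sqrt (a + b - 2) * (x - (a - 1) / (a + b - 2)))) ∧
    (∀ x : ℝ, x ≤ (a - 1) / (a + b - 2) →
      betaCDF a b x ≤
        2 * stdNormalCDF (2 * Real.sqrt (a + b - 2) * (x - (a - 1) / (a + b - 2)))) := by
  have hab : a + b - 2 ≠ 0 := by linarith
  refine ⟨fun x hx => ?_, fun x hx => ?_⟩
  · convert one_sub_betaCDF_le ha hb hx using 3
    rw [betaMode]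
    ring
  · have hx' : betaMode b a ≤ 1 - x := by
      rw [betaMode_swap hab]
      exact sub_le_sub_left hx 1
    rw [betaCDF_eq_one_sub_betaCDF_swap ha.le hb.le]
    convert one_sub_betaCDF_le hb ha hx' using 3
    rw [betaMode_swap hab, add_comm b a, betaMode]
    ring
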